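/- arXiv:1601.03083 — 6 statements merged into one kernel-verified Lean document; each statement's English description precedes it below -/
import Mathlib

section
/- Given a set X of (k-1)(d+1)+1 points in R^d, there exists a partition of X into k parts A_1,...,A_k such that the intersection of the convex hulls of the parts is nonempty. -/
/-!
Sarkaria's proof. Lift each point `x j` to `(x j, 1) ∈ E × ℝ` and tensor it with `m + 1` vectors
`v 0, …, v m ∈ ℝᵐ` whose only linear relation is `∑ i, v i = 0`, so that `0` lies in the convex
hull of every colour class `{v i ⊗ (x j, 1) | i}`. Bárány's colourful Carathéodory theorem in
`ℝᵐ ⊗ (E × ℝ)`, of dimension `m (dim E + 1)`, then picks a colour `g j` for every point and weights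
`l` with `∑ j, l j • v (g j) ⊗ (x j, 1) = 0`. Hence the partial sums `∑_{g j = i} l j • (x j, 1)`
do not depend on `i`, and their common value, normalised, lies in every `conv {x j | g j = i}`.

Colourful Carathéodory: take a colourful choice whose hull is closest to `0`, with nearest point
`p`. If `p ≠ 0`, the hull lies in the half-space `‖p‖² ≤ ⟪p, ·⟫`, so by Carathéodory in the
supporting hyperplane some colour `j₀` is not needed to represent `p`. Replacing it by a point of
colour `j₀` with `⟪p, ·⟫ ≤ 0` gives a colourful hull containing `p` in which `p` is no longer the
nearest point to `0`.
-/

open scoped RealInnerProductSpace Classical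

open Finset Module

theorem eq_of_sum_mul_eq_of_forall_le {κ : Type*} [Fintype κ] {w f : κ → ℝ} {a : ℝ}
    (hw : ∀ i, 0 < w i) (hw₁ : ∑ i, w i = 1) (hf : ∀ i, a ≤ f i) (hsum : ∑ i, w i * f i = a)
    (i : κ) : f i = a := by
  have h : ∑ i, w i * (f i - a) = 0 := by
    simp only [mul_sub, sum_sub_distrib, ← sum_mul, hw₁, hsum, one_mul, sub_self]
  have := (sum_eq_zero_iff_of_nonneg fun i _ => mul_nonneg (hw i).le (sub_nonneg.2 (hf i))).1 h
    i (mem_univ i)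
  linarith [(mul_eq_zero.1 this).resolve_left (hw i).ne']

section Convex

variable {ι E : Type*} [AddCommGroup E] [Module ℝ E]

theorem mem_convexHull_range_iff_exists_weights [Fintype ι] {c : ι → E} {x : E} :
    x ∈ convexHull ℝ (Set.range c) ↔
      ∃ w : ι → ℝ, (∀ i, 0 ≤ w i) ∧ ∑ i, w i = 1 ∧ ∑ i, w i • c i = x := by
  refine ⟨fun hx => ?_, fun ⟨w, hw₀, hw₁, hx⟩ =>
    mem_convexHull_of_exists_fintype w c hw₀ hw₁ (Set.mem_range_self ·) hx⟩
  rw [convexHull_range_eq_exists_affineCombination] at hx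
  obtain ⟨s, w, hw₀, hw₁, rfl⟩ := hx
  refine ⟨fun i => if i ∈ s then w i else 0, fun i => ?_, ?_, ?_⟩
  · by_cases hi : i ∈ s <;> simp [hi, hw₀]
  · rwa [sum_ite_mem, univ_inter]
  · simp only [ite_smul, zero_smul, sum_ite_mem, univ_inter,
      s.affineCombination_eq_linear_combination c w hw₁]

theorem exists_apply_nonpos_of_zero_mem_convexHull {s : Set E} (h : 0 ∈ convexHull ℝ s)
    (φ : E →ₗ[ℝ] ℝ) : ∃ x ∈ s, φ x ≤ 0 := by
  by_contra! hpos
  have : 0 < φ 0 := convexHull_min hpos (convex_halfSpace_gt φ.isLinear 0) h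
  simp at this

theorem AffineIndependent.card_le_finrank_of_forall_apply_eq {K V : Type*} [Field K]
    [AddCommGroup V] [Module K V] [FiniteDimensional K V] {z : ι → V} [Fintype ι]
    (hz : AffineIndependent K z) {φ : Dual K V} (hφ : φ ≠ 0) {a : K} (ha : ∀ i, φ (z i) = a) :
    Fintype.card ι ≤ finrank K V := by
  have hspan : vectorSpan K (Set.range z) ≤ LinearMap.ker φ := by
    rw [vectorSpan_def, Submodule.span_le]
    rintro _ ⟨_, ⟨i, rfl⟩, _, ⟨j, rfl⟩, rfl⟩
    simp [ha]
  calc Fintype.card ι ≤ finrank K (vectorSpan K (Set.range z)) + 1 := hz.card_le_finrank_succ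
    _ ≤ finrank K (LinearMap.ker φ) + 1 := by gcongr; exact Submodule.finrank_mono hspan
    _ = finrank K V := Dual.finrank_ker_add_one_of_ne_zero hφ

/-- Carathéodory's theorem inside the supporting hyperplane `φ = φ p`. -/
theorem exists_mem_convexHull_image_compl [Fintype ι] [FiniteDimensional ℝ E] {c : ι → E}
    (hι : finrank ℝ E < Fintype.card ι) {φ : Dual ℝ E} (hφ : φ ≠ 0) {p : E}
    (hp : p ∈ convexHull ℝ (Set.range c)) (hφp : ∀ j, φ p ≤ φ (c j)) :
    ∃ j₀, p ∈ convexHull ℝ (c '' {j₀}ᶜ) := by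
  obtain ⟨κ, _, z, w, hzc, hz, hw₀, hw₁, rfl⟩ := eq_pos_convex_span_of_mem_convexHull hp
  choose σ hσ using fun i => hzc (Set.mem_range_self i)
  have hφz : ∀ i, φ (z i) = φ (∑ i, w i • z i) :=
    eq_of_sum_mul_eq_of_forall_le (f := fun i => φ (z i)) hw₀ hw₁ (fun i => hσ i ▸ hφp (σ i))
      (by simp [map_sum])
  have hcard : Fintype.card κ < Fintype.card ι :=
    (hz.card_le_finrank_of_forall_apply_eq hφ hφz).trans_lt hι
  obtain ⟨j₀, hj₀⟩ : ∃ j₀, j₀ ∉ Set.range σ := by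
    by_contra! h
    exact hcard.not_ge (Fintype.card_le_of_surjective σ h)
  refine ⟨j₀, (convex_convexHull ℝ _).sum_mem (fun i _ => (hw₀ i).le) hw₁ fun i _ => ?_⟩
  exact subset_convexHull ℝ _ ⟨σ i, fun h => hj₀ ⟨i, h⟩, hσ i⟩

end Convex

section InnerProductSpace

variable {E : Type*} [NormedAddCommGroup E] [InnerProductSpace ℝ E]

theorem norm_sq_le_inner_of_forall_norm_le {K : Set E} (hK : Convex ℝ K) {p : E} (hp : p ∈ K)
    (hmin : ∀ z ∈ K, ‖p‖ ≤ ‖z‖) {q : E} (hq : q ∈ K) : ‖p‖ ^ 2 ≤ ⟪p, q⟫ := by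
  have : Nonempty K := ⟨⟨p, hp⟩⟩
  have hinf : ‖0 - p‖ = ⨅ z : K, ‖0 - (z : E)‖ :=
    le_antisymm (le_ciInf fun z => by simpa using hmin z z.2)
      (ciInf_le ⟨0, by rintro _ ⟨z, rfl⟩; positivity⟩ (⟨p, hp⟩ : K))
  have := (norm_eq_iInf_iff_real_inner_le_zero hK hp).1 hinf q hq
  rw [zero_sub, inner_neg_left, inner_sub_right, real_inner_self_eq_norm_sq] at this
  linarith

theorem colorful_caratheodory_of_inner [FiniteDimensional ℝ E] {ι κ : Type*} [Fintype ι]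
    [Finite κ] (hι : Fintype.card ι = finrank ℝ E + 1) (f : ι → κ → E)
    (hf : ∀ j, (0 : E) ∈ convexHull ℝ (Set.range (f j))) :
    ∃ g : ι → κ, (0 : E) ∈ convexHull ℝ (Set.range fun j => f j (g j)) := by
  set K : (ι → κ) → Set E := fun g => convexHull ℝ (Set.range fun j => f j (g j))
  have : Nonempty ι := Fintype.card_pos_iff.1 (by omega)
  have : Nonempty κ := Set.range_nonempty_iff_nonempty.1
    (convexHull_nonempty_iff.1 ⟨0, hf (Classical.arbitrary ι)⟩)
  have hKne : ∀ g, (K g).Nonempty := fun g => convexHull_nonempty_iff.2 (Set.range_nonempty _)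
  obtain ⟨g, hg⟩ := Finite.exists_min fun g => Metric.infDist 0 (K g)
  obtain ⟨p, hpK, hp⟩ := ((Set.finite_range _).isCompact_convexHull ℝ).exists_infDist_eq_dist
    (hKne g) 0
  have hmin : ∀ g', ∀ z ∈ K g', ‖p‖ ≤ ‖z‖ := fun g' z hz => by
    calc ‖p‖ = Metric.infDist 0 (K g) := by rw [hp, dist_zero_left]
      _ ≤ Metric.infDist 0 (K g') := hg g'
      _ ≤ ‖z‖ := by simpa using Metric.infDist_le_dist_of_mem hz (x := (0 : E))
  refine ⟨g, ?_⟩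
  by_contra hp0
  replace hp0 : p ≠ 0 := by rintro rfl; exact hp0 hpK
  obtain ⟨j₀, hj₀⟩ := exists_mem_convexHull_image_compl (by omega) (φ := innerₛₗ ℝ p)
    (fun h => hp0 (by simpa using LinearMap.congr_fun h p)) hpK
    fun j => by
      simpa [real_inner_self_eq_norm_sq] using norm_sq_le_inner_of_forall_norm_le
        (convex_convexHull ℝ _) hpK (hmin g) (subset_convexHull ℝ _ ⟨j, rfl⟩)
  obtain ⟨_, ⟨i₀, rfl⟩, hi₀⟩ := exists_apply_nonpos_of_zero_mem_convexHull (hf j₀) (innerₛₗ ℝ p)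
  set g' := Function.update g j₀ i₀
  have hpK' : p ∈ K g' := by
    refine convexHull_mono ?_ hj₀
    rintro _ ⟨j, hj, rfl⟩
    exact ⟨j, by simp [g', Function.update_of_ne hj]⟩
  have hbK' : f j₀ i₀ ∈ K g' := subset_convexHull ℝ _ ⟨j₀, by simp [g']⟩
  have := norm_sq_le_inner_of_forall_norm_le (convex_convexHull ℝ _) hpK' (hmin g') hbK'
  exact hp0 (norm_eq_zero.1 (by nlinarith [norm_nonneg p, this.trans (by simpa using hi₀)]))

end InnerProductSpace

theorem colorful_caratheodory {E : Type*} [AddCommGroup E] [Module ℝ E] [FiniteDimensional ℝ E]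
    {ι κ : Type*} [Fintype ι] [Finite κ] (hι : Fintype.card ι = finrank ℝ E + 1)
    (f : ι → κ → E) (hf : ∀ j, (0 : E) ∈ convexHull ℝ (Set.range (f j))) :
    ∃ g : ι → κ, (0 : E) ∈ convexHull ℝ (Set.range fun j => f j (g j)) := by
  let e : E ≃ₗ[ℝ] EuclideanSpace ℝ (Fin (finrank ℝ E)) := .ofFinrankEq _ _ (by simp)
  have he : ∀ s : Set E, (0 : E) ∈ convexHull ℝ s ↔ 0 ∈ convexHull ℝ (e '' s) := fun s => by
    have h := e.toLinearMap.image_convexHull s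
    rw [LinearEquiv.coe_coe] at h
    rw [← h]
    simp
  obtain ⟨g, hg⟩ := colorful_caratheodory_of_inner (by simpa using hι) (fun j => e ∘ f j)
    fun j => by rw [Set.range_comp]; exact (he _).1 (hf j)
  exact ⟨g, (he _).2 (by rwa [← Set.range_comp])⟩

/-- The vectors `e₀, …, e_{m-1}, -(e₀ + ⋯ + e_{m-1})` of `ℝᵐ`; their only linear relations are the
multiples of `∑ i, sarkariaVector m i = 0`. -/
def sarkariaVector (m : ℕ) (i : Fin (m + 1)) (r : Fin m) : ℝ :=
  (if i = r.castSucc then 1 else 0) - (if i = Fin.last m then 1 else 0)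

theorem sum_sarkariaVector_smul {M : Type*} [AddCommGroup M] [Module ℝ M] {m : ℕ}
    (y : Fin (m + 1) → M) (r : Fin m) :
    ∑ i, sarkariaVector m i r • y i = y r.castSucc - y (Fin.last m) := by
  simp [sarkariaVector, sub_smul, sum_sub_distrib, ite_smul]

theorem sum_sarkariaVector {m : ℕ} (r : Fin m) : ∑ i, sarkariaVector m i r = 0 := by
  simpa using sum_sarkariaVector_smul (fun _ => (1 : ℝ)) r

section Tverberg

variable {ι E : Type*} [Fintype ι] [AddCommGroup E] [Module ℝ E]

theorem iInter_convexHull_fiber_nonempty {m : ℕ} (x : ι → E) (g : ι → Fin (m + 1))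
    {l : ι → ℝ} (hl₀ : ∀ j, 0 ≤ l j) (hl₁ : ∑ j, l j = 1) {y : E × ℝ}
    (hy : ∀ i, ∑ j with g j = i, l j • (x j, (1 : ℝ)) = y) :
    (⋂ i, convexHull ℝ (x '' {j | g j = i})).Nonempty := by
  have hfst : ∀ i, ∑ j with g j = i, l j • x j = y.1 := fun i => by
    simpa [Prod.fst_sum] using congrArg Prod.fst (hy i)
  have hsnd : ∀ i, ∑ j with g j = i, l j = y.2 := fun i => by
    simpa [Prod.snd_sum] using congrArg Prod.snd (hy i)
  have hy₂ : 0 < y.2 := by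
    have : (m + 1 : ℝ) * y.2 = 1 := by
      calc (m + 1 : ℝ) * y.2 = ∑ i, ∑ j with g j = i, l j := by simp [hsnd]
        _ = 1 := by rw [sum_fiberwise, hl₁]
    nlinarith
  refine ⟨y.2⁻¹ • y.1, Set.mem_iInter.2 fun i => ?_⟩
  have := centerMass_mem_convexHull (univ.filter (g · = i)) (fun j _ => hl₀ j) (hsnd i ▸ hy₂)
    (z := x) (s := x '' {j | g j = i}) fun j hj => ⟨j, by simpa using hj, rfl⟩
  rwa [centerMass, hsnd, hfst] at this

theorem exists_coloring_iInter_convexHull_nonempty [FiniteDimensional ℝ E] (m : ℕ) (x : ι → E)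
    (hι : Fintype.card ι = m * (finrank ℝ E + 1) + 1) :
    ∃ g : ι → Fin (m + 1), (⋂ i, convexHull ℝ (x '' {j | g j = i})).Nonempty := by
  set F : ι → Fin (m + 1) → Fin m → E × ℝ := fun j i r => sarkariaVector m i r • (x j, 1)
  have hF : ∀ j, (0 : Fin m → E × ℝ) ∈ convexHull ℝ (Set.range (F j)) := fun j => by
    have hsum : ∑ i, F j i = 0 := by
      ext1 r
      simp only [F, Finset.sum_apply, ← sum_smul, sum_sarkariaVector, zero_smul, Pi.zero_apply]
    exact mem_convexHull_of_exists_fintype (fun _ => (m + 1 : ℝ)⁻¹) (F j)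
      (fun _ => by positivity) (by simp [mul_inv_cancel₀ (by positivity : (m + 1 : ℝ) ≠ 0)])
      Set.mem_range_self (by rw [← smul_sum, hsum, smul_zero])
  obtain ⟨g, hg⟩ := colorful_caratheodory (by simp [hι, finrank_pi_fintype, finrank_prod]) F hF
  obtain ⟨l, hl₀, hl₁, hl⟩ := mem_convexHull_range_iff_exists_weights.1 hg
  set y : Fin (m + 1) → E × ℝ := fun i => ∑ j with g j = i, l j • (x j, (1 : ℝ))
  have hy : ∀ r : Fin m, y r.castSucc = y (Fin.last m) := fun r => by
    rw [← sub_eq_zero, ← sum_sarkariaVector_smul]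
    calc ∑ i, sarkariaVector m i r • y i = ∑ j, l j • F j (g j) r := by
          simp only [y, smul_sum]
          rw [← sum_fiberwise univ g]
          refine sum_congr rfl fun i _ => sum_congr rfl fun j hj => ?_
          rw [(mem_filter.1 hj).2, smul_comm]
      _ = 0 := by simpa using congrFun hl r
  refine ⟨g, iInter_convexHull_fiber_nonempty x g hl₀ hl₁ (y := y (Fin.last m)) fun i => ?_⟩
  induction i using Fin.lastCases with
  | last => rfl
  | cast r => exact hy r

end Tverberg

/-- Tverberg's theorem: any `(k-1)(d+1)+1` points in `ℝ^d` can be partitioned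
into `k` parts whose convex hulls have a common point. -/
theorem tverberg (d k : ℕ) (hk : 0 < k)
    (X : Finset (EuclideanSpace ℝ (Fin d)))
    (hX : X.card = (k - 1) * (d + 1) + 1) :
    ∃ A : Fin k → Finset (EuclideanSpace ℝ (Fin d)),
      (∀ i j, i ≠ j → Disjoint (A i) (A j)) ∧
      (Finset.univ.biUnion A = X) ∧
      (⋂ i, convexHull ℝ (A i : Set (EuclideanSpace ℝ (Fin d)))).Nonempty := by
  obtain ⟨m, rfl⟩ : ∃ m, k = m + 1 := ⟨k - 1, by omega⟩
  obtain ⟨g, hg⟩ := exists_coloring_iInter_convexHull_nonempty m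
    ((↑) : X → EuclideanSpace ℝ (Fin d)) (by simpa using hX)
  let c : EuclideanSpace ℝ (Fin d) → Fin (m + 1) := fun a => if h : a ∈ X then g ⟨a, h⟩ else 0
  refine ⟨fun i => {a ∈ X | c a = i}, fun i j hij => disjoint_filter.2 fun _ _ hi hj => hij
    (hi ▸ hj), biUnion_filter_eq_of_maps_to fun _ _ => mem_univ _, ?_⟩
  convert hg using 4 with i
  ext a
  by_cases ha : a ∈ X <;> simp [c, ha]
end

section
/- For any finite set X of points in R^d, there exists a point p in R^d such that every closed half-space containing p contains at least |X|/(d+1) points of X. -/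
/-!
Call `A ⊆ X` deep if it misses fewer than `#X / (d + 1)` points of `X`. By pigeonhole any `d + 1`
deep sets share a point of `X`, so by Helly's theorem the convex hulls of all deep sets have a
common point `p`. If a closed half-space containing `p` held fewer than `#X / (d + 1)` points of
`X`, the points outside it would form a deep set whose convex hull lies in the complementary open
half-space, which misses `p`.
-/

open Finset Module

namespace Finset

variable {α : Type*} [DecidableEq α]

theorem exists_mem_forall_mem_of_card_sdiff_lt {n : ℕ} {X : Finset α} {I : Finset (Finset α)}
    (hI : I.Nonempty) (hIcard : #I ≤ n + 1) (hlarge : ∀ A ∈ I, (n + 1) * #(X \ A) < #X) :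
    ∃ x ∈ X, ∀ A ∈ I, x ∈ A := by
  have hsum : (n + 1) * ∑ A ∈ I, #(X \ A) < (n + 1) * #X :=
    calc (n + 1) * ∑ A ∈ I, #(X \ A) = ∑ A ∈ I, (n + 1) * #(X \ A) := mul_sum ..
      _ < ∑ _A ∈ I, #X := sum_lt_sum_of_nonempty hI hlarge
      _ = #I * #X := by rw [sum_const, smul_eq_mul]
      _ ≤ (n + 1) * #X := Nat.mul_le_mul_right _ hIcard
  have hunion : #(I.biUnion (X \ ·)) < #X :=
    card_biUnion_le.trans_lt (Nat.lt_of_mul_lt_mul_left hsum)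
  obtain ⟨x, hxX, hx⟩ := exists_mem_notMem_of_card_lt_card hunion
  refine ⟨x, hxX, fun A hA => ?_⟩
  by_contra hxA
  exact hx (mem_biUnion.2 ⟨A, hA, mem_sdiff.2 ⟨hxX, hxA⟩⟩)

def deepSubsets (X : Finset α) (n : ℕ) : Finset (Finset α) :=
  {A ∈ X.powerset | (n + 1) * #(X \ A) < #X}

variable {𝕜 E : Type*} [Field 𝕜] [LinearOrder 𝕜] [IsStrictOrderedRing 𝕜]
  [AddCommGroup E] [Module 𝕜 E]

theorem nonempty_iInter_convexHull_deepSubsets [FiniteDimensional 𝕜 E] [DecidableEq E]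
    (X : Finset E) :
    (⋂ A ∈ X.deepSubsets (finrank 𝕜 E), convexHull 𝕜 (A : Set E)).Nonempty := by
  refine Convex.helly_theorem' (fun A _ => convex_convexHull 𝕜 _) fun I hI hIcard => ?_
  rcases I.eq_empty_or_nonempty with rfl | hIne
  · simp
  obtain ⟨x, -, hx⟩ := exists_mem_forall_mem_of_card_sdiff_lt hIne hIcard
    fun A hA => (mem_filter.1 (hI hA)).2
  exact ⟨x, Set.mem_iInter₂.2 fun A hA => subset_convexHull 𝕜 _ (hx A hA)⟩

theorem card_le_mul_card_filter_of_mem_convexHull [DecidableEq E] {n : ℕ} {X : Finset E} {p : E}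
    (hp : ∀ A ∈ X.deepSubsets n, p ∈ convexHull 𝕜 (A : Set E)) (f : E →ₗ[𝕜] 𝕜) {b : 𝕜}
    (hb : b ≤ f p) : #X ≤ (n + 1) * #{x ∈ X | b ≤ f x} := by
  by_contra! hlt
  set A := {x ∈ X | f x < b}
  have hA : A ∈ X.deepSubsets n := by
    refine mem_filter.2 ⟨mem_powerset.2 (filter_subset _ _), ?_⟩
    simpa only [A, ← filter_not, not_lt] using hlt
  have hpA : p ∈ {x | f x < b} :=
    convexHull_min (fun x hx => (mem_filter.1 hx).2) (convex_halfSpace_lt f.isLinear b) (hp A hA)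
  exact not_lt.2 hb hpA

theorem exists_centerpoint [FiniteDimensional 𝕜 E] (X : Finset E) :
    ∃ p : E, ∀ (f : E →ₗ[𝕜] 𝕜) (b : 𝕜), b ≤ f p → #X ≤ (finrank 𝕜 E + 1) * #{x ∈ X | b ≤ f x} := by
  classical
  obtain ⟨p, hp⟩ := nonempty_iInter_convexHull_deepSubsets (𝕜 := 𝕜) X
  exact ⟨p, fun f b => card_le_mul_card_filter_of_mem_convexHull (Set.mem_iInter₂.1 hp) f⟩

end Finset

/-- Rado's centerpoint theorem: every finite set `X ⊆ ℝ^d` has a point `p`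
such that every closed half-space containing `p` contains at least
`|X|/(d+1)` points of `X`. -/
theorem centerpoint_theorem (d : ℕ) (X : Finset (EuclideanSpace ℝ (Fin d))) :
    ∃ p : EuclideanSpace ℝ (Fin d),
      ∀ (a : EuclideanSpace ℝ (Fin d)) (b : ℝ), a ≠ 0 → b ≤ (inner ℝ a p : ℝ) →
        ((X.card : ℝ) / (d + 1)) ≤
          (((X : Set (EuclideanSpace ℝ (Fin d))) ∩ {x | b ≤ (inner ℝ a x : ℝ)}).ncard : ℝ) := by
  obtain ⟨p, hp⟩ := X.exists_centerpoint (𝕜 := ℝ)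
  refine ⟨p, fun a b _ hb => ?_⟩
  have hcard := hp (innerₛₗ ℝ a) b hb
  rw [finrank_euclideanSpace_fin] at hcard
  have hset : (X : Set (EuclideanSpace ℝ (Fin d))) ∩ {x | b ≤ inner ℝ a x} =
      ↑{x ∈ X | b ≤ inner ℝ a x} := by ext; simp
  rw [hset, Set.ncard_coe_finset, div_le_iff₀ (by positivity), mul_comm]
  exact_mod_cast hcard
end

section
/- Let X be a set of n points in R^d, let z be an α-centerpoint of X (every closed half-space containing z contains at least αn points of X), and suppose z ∈ conv(X). Then there exist at least ⌈αn/d⌉ pairwise disjoint subsets C_1,...,C_m of X, each of size at most d+1, such that z ∈ conv(C_i) for all i. -/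
/-!
Remove from `X`, one at a time, inclusion-minimal subsets whose convex hull contains `z`, until
the remaining points no longer have `z` in their hull. A hyperplane through `z` then strictly
separates `z` from the remainder, so the closed half-space on the other side, which holds at least
`αn` points, meets only the removed sets. A minimal set is affinely independent, hence has at most
`d + 1` points, and at most `d` of them in a closed half-space whose boundary passes through `z`:
if all of it lies in the half-space, minimality pushes it into the boundary hyperplane, where at
most `d` affinely independent points fit. Hence `αn ≤ md`.
-/

open Finset Module

section Combinatorial

variable {𝕜 E : Type*} [Field 𝕜] [AddCommGroup E] [Module 𝕜 E] {z : E} {C Y : Finset E}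

theorem card_le_finrank_of_affineIndependent_of_forall_eq [FiniteDimensional 𝕜 E]
    {f : E →ₗ[𝕜] 𝕜} (hf : f ≠ 0) {c : 𝕜} (hC : AffineIndependent 𝕜 ((↑) : C → E))
    (hfC : ∀ x ∈ C, f x = c) : #C ≤ finrank 𝕜 E := by
  have hspan : vectorSpan 𝕜 (Set.range ((↑) : C → E)) ≤ LinearMap.ker f := by
    rw [vectorSpan_def, Submodule.span_le]
    rintro _ ⟨x, ⟨⟨x, hx⟩, rfl⟩, y, ⟨⟨y, hy⟩, rfl⟩, rfl⟩
    simp [hfC x hx, hfC y hy]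
  calc #C = Fintype.card C := (Fintype.card_coe C).symm
    _ ≤ finrank 𝕜 (vectorSpan 𝕜 (Set.range ((↑) : C → E))) + 1 := hC.card_le_finrank_succ
    _ ≤ finrank 𝕜 (LinearMap.ker f) + 1 := Nat.add_le_add_right (Submodule.finrank_mono hspan) 1
    _ = finrank 𝕜 E := Module.Dual.finrank_ker_add_one_of_ne_zero hf

variable [LinearOrder 𝕜]

variable (𝕜) in
def IsMinimalHullSet (z : E) (C : Finset E) : Prop :=
  Minimal (fun C : Finset E => z ∈ convexHull 𝕜 (C : Set E)) C

theorem IsMinimalHullSet.mem_convexHull (hC : IsMinimalHullSet 𝕜 z C) :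
    z ∈ convexHull 𝕜 (C : Set E) :=
  hC.prop

theorem exists_isMinimalHullSet_subset (hz : z ∈ convexHull 𝕜 (Y : Set E)) :
    ∃ C ⊆ Y, IsMinimalHullSet 𝕜 z C :=
  exists_minimal_le_of_wellFoundedLT _ Y hz

theorem IsMinimalHullSet.nonempty (hC : IsMinimalHullSet 𝕜 z C) : C.Nonempty := by
  rw [nonempty_iff_ne_empty]
  rintro rfl
  simpa using hC.mem_convexHull

theorem exists_pairwiseDisjoint_isMinimalHullSet [DecidableEq E] (z : E) (Y : Finset E) :
    ∃ 𝒞 : Finset (Finset E), (𝒞 : Set (Finset E)).PairwiseDisjoint id ∧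
      (∀ C ∈ 𝒞, C ⊆ Y ∧ IsMinimalHullSet 𝕜 z C) ∧
      z ∉ convexHull 𝕜 ((Y \ 𝒞.biUnion id : Finset E) : Set E) := by
  induction Y using Finset.strongInduction with
  | H Y ih =>
    by_cases hz : z ∈ convexHull 𝕜 (Y : Set E)
    · obtain ⟨C, hCY, hC⟩ := exists_isMinimalHullSet_subset hz
      obtain ⟨𝒞, hdisj, h𝒞, hrest⟩ := ih (Y \ C) (sdiff_ssubset hCY hC.nonempty)
      refine ⟨insert C 𝒞, ?_, ?_, ?_⟩
      · rw [coe_insert]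
        exact hdisj.insert fun D hD _ => disjoint_of_subset_right (h𝒞 D hD).1 disjoint_sdiff
      · simp only [mem_insert, forall_eq_or_imp]
        exact ⟨⟨hCY, hC⟩, fun D hD => ⟨(h𝒞 D hD).1.trans sdiff_subset, (h𝒞 D hD).2⟩⟩
      · rwa [biUnion_insert, id, sdiff_union_distrib, ← Finset.sdiff_sdiff_left']
    · exact ⟨∅, by simp, by simp, by simpa using hz⟩

variable [IsStrictOrderedRing 𝕜]

theorem IsMinimalHullSet.affineIndependent (hC : IsMinimalHullSet 𝕜 z C) :
    AffineIndependent 𝕜 ((↑) : C → E) := by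
  have hz := hC.mem_convexHull
  rw [convexHull_eq_union] at hz
  simp only [Set.mem_iUnion] at hz
  obtain ⟨t, htC, ht, hzt⟩ := hz
  rwa [hC.eq_of_le hzt (coe_subset.1 htC)] at ht

theorem mem_convexHull_filter_eq_of_forall_le (f : E →ₗ[𝕜] 𝕜)
    (hz : z ∈ convexHull 𝕜 (C : Set E)) (hC : ∀ x ∈ C, f z ≤ f x) :
    z ∈ convexHull 𝕜 (C.filter (fun x => f x = f z) : Set E) := by
  obtain ⟨w, hw₀, hw₁, rfl⟩ := mem_convexHull'.1 hz
  -- `∑ w x (f x - f z) = 0` with nonnegative terms, so the weight sits on the hyperplane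
  have hexcess : ∑ x ∈ C, w x * (f x - f (∑ y ∈ C, w y • y)) = 0 := by
    simp only [mul_sub, sum_sub_distrib, ← sum_mul, hw₁, one_mul, map_sum, map_smul, smul_eq_mul,
      sub_self]
  have hsupp : ∀ x ∈ C, w x ≠ 0 → f x = f (∑ y ∈ C, w y • y) := by
    intro x hx hwx
    have := (sum_eq_zero_iff_of_nonneg fun y hy =>
      mul_nonneg (hw₀ y hy) (sub_nonneg.2 (hC y hy))).1 hexcess x hx
    exact sub_eq_zero.1 ((mul_eq_zero.1 this).resolve_left hwx)
  refine mem_convexHull'.2 ⟨w, fun x hx => hw₀ x (mem_filter.1 hx).1, ?_, ?_⟩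
  · rwa [sum_filter_of_ne hsupp]
  · exact sum_filter_of_ne fun x hx hwx => hsupp x hx fun h => hwx (by rw [h, zero_smul])

variable [FiniteDimensional 𝕜 E]

theorem IsMinimalHullSet.card_le_finrank_add_one (hC : IsMinimalHullSet 𝕜 z C) :
    #C ≤ finrank 𝕜 E + 1 := by
  have := hC.affineIndependent.card_le_finrank_succ
  rw [Fintype.card_coe] at this
  exact this.trans (Nat.add_le_add_right (Submodule.finrank_le _) 1)

theorem IsMinimalHullSet.card_filter_le_finrank (hC : IsMinimalHullSet 𝕜 z C) {f : E →ₗ[𝕜] 𝕜}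
    (hf : f ≠ 0) : #(C.filter (fun x => f z ≤ f x)) ≤ finrank 𝕜 E := by
  by_cases hall : ∀ x ∈ C, f z ≤ f x
  · have hflat : C.filter (fun x => f x = f z) = C :=
      hC.eq_of_le (mem_convexHull_filter_eq_of_forall_le f hC.mem_convexHull hall)
        (filter_subset _ _)
    refine (card_filter_le _ _).trans
      (card_le_finrank_of_affineIndependent_of_forall_eq hf (c := f z) hC.affineIndependent
        fun x hx => ?_)
    rw [← hflat] at hx
    exact (mem_filter.1 hx).2
  · exact Nat.le_of_lt_succ <|
      (card_lt_card (filter_ssubset.2 (by simpa using hall))).trans_le hC.card_le_finrank_add_one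

theorem card_filter_le_card_mul_finrank [DecidableEq E]
    {f : E →ₗ[𝕜] 𝕜} (hf : f ≠ 0) {𝒞 : Finset (Finset E)}
    (h𝒞 : ∀ C ∈ 𝒞, IsMinimalHullSet 𝕜 z C)
    (hY : ∀ x ∈ Y, f z ≤ f x → x ∈ 𝒞.biUnion id) :
    #(Y.filter (fun x => f z ≤ f x)) ≤ #𝒞 * finrank 𝕜 E :=
  calc #(Y.filter (fun x => f z ≤ f x))
      ≤ #(𝒞.biUnion fun C => C.filter (fun x => f z ≤ f x)) := by
        refine card_le_card fun x hx => ?_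
        obtain ⟨hxY, hfx⟩ := mem_filter.1 hx
        obtain ⟨C, hC, hxC⟩ := mem_biUnion.1 (hY x hxY hfx)
        exact mem_biUnion.2 ⟨C, hC, mem_filter.2 ⟨hxC, hfx⟩⟩
    _ ≤ ∑ C ∈ 𝒞, #(C.filter (fun x => f z ≤ f x)) := card_biUnion_le
    _ ≤ #𝒞 * finrank 𝕜 E :=
      sum_le_card_nsmul _ _ _ fun C hC => (h𝒞 C hC).card_filter_le_finrank hf

end Combinatorial

theorem exists_inner_lt_of_notMem_convexHull {F : Type*} [NormedAddCommGroup F]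
    [InnerProductSpace ℝ F] [CompleteSpace F] [Nontrivial F] {z : F} {R : Finset F}
    (hz : z ∉ convexHull ℝ (R : Set F)) :
    ∃ a : F, a ≠ 0 ∧ ∀ x ∈ R, inner ℝ a x < inner ℝ a z := by
  obtain ⟨f, u, hfR, hfz⟩ := geometric_hahn_banach_closed_point (convex_convexHull ℝ _)
    (R.finite_toSet.isClosed_convexHull ℝ) hz
  set a := (InnerProductSpace.toDual ℝ F).symm f
  have hfa : ∀ x, inner ℝ a x = f x := fun x => InnerProductSpace.toDual_symm_apply
  by_cases ha : a = 0
  · obtain ⟨b, hb⟩ := exists_ne (0 : F)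
    refine ⟨b, hb, fun x hx => absurd (hfR x (subset_convexHull ℝ _ hx)) ?_⟩
    simp only [← hfa, ha, inner_zero_left] at hfz ⊢
    exact hfz.le.not_gt
  · refine ⟨a, ha, fun x hx => ?_⟩
    simpa only [hfa] using (hfR x (subset_convexHull ℝ _ hx)).trans hfz

theorem exists_ne_zero_card_filter_inner_le_card_mul_finrank {F : Type*}
    [NormedAddCommGroup F] [InnerProductSpace ℝ F] [FiniteDimensional ℝ F] [Nontrivial F]
    [DecidableEq F] {z : F} {X : Finset F} {𝒞 : Finset (Finset F)}
    (h𝒞 : ∀ C ∈ 𝒞, IsMinimalHullSet ℝ z C)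
    (hrest : z ∉ convexHull ℝ ((X \ 𝒞.biUnion id : Finset F) : Set F)) :
    ∃ a : F, a ≠ 0 ∧ #(X.filter fun x => inner ℝ a z ≤ inner ℝ a x) ≤ #𝒞 * finrank ℝ F := by
  obtain ⟨a, ha, hsep⟩ := exists_inner_lt_of_notMem_convexHull hrest
  have hf : innerₛₗ ℝ a ≠ 0 := fun h => ha (by simpa using LinearMap.congr_fun h a)
  refine ⟨a, ha, card_filter_le_card_mul_finrank hf h𝒞 fun x hx hax => ?_⟩
  by_contra hx𝒞
  exact (hsep x (mem_sdiff.2 ⟨hx, hx𝒞⟩)).not_ge hax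

theorem centerpoint_gives_tverberg_general (d : ℕ) (α : ℝ)
    (X : Finset (EuclideanSpace ℝ (Fin d))) (n : ℕ)
    (z : EuclideanSpace ℝ (Fin d))
    (hcenter : ∀ (a : EuclideanSpace ℝ (Fin d)) (b : ℝ), a ≠ 0 → b ≤ (inner ℝ a z : ℝ) →
      α * n ≤ (((X : Set (EuclideanSpace ℝ (Fin d))) ∩ {x | b ≤ (inner ℝ a x : ℝ)}).ncard : ℝ)) :
    ∃ (m : ℕ) (C : Fin m → Finset (EuclideanSpace ℝ (Fin d))),
      ⌈α * n / d⌉₊ ≤ m ∧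
      (∀ i j, i ≠ j → Disjoint (C i) (C j)) ∧
      (∀ i, C i ⊆ X) ∧
      (∀ i, (C i).card ≤ d + 1) ∧
      (∀ i, z ∈ convexHull ℝ (C i : Set (EuclideanSpace ℝ (Fin d)))) := by
  classical
  obtain ⟨𝒞, hdisj, h𝒞, hrest⟩ := exists_pairwiseDisjoint_isMinimalHullSet (𝕜 := ℝ) z X
  let C (i : Fin #𝒞) : Finset (EuclideanSpace ℝ (Fin d)) := 𝒞.equivFin.symm i
  have hC (i : Fin #𝒞) : C i ∈ 𝒞 := (𝒞.equivFin.symm i).2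
  refine ⟨#𝒞, C, ?_, fun i j hij => hdisj (hC i) (hC j) fun h => hij ?_,
    fun i => (h𝒞 _ (hC i)).1, fun i => ?_, fun i => (h𝒞 _ (hC i)).2.mem_convexHull⟩
  · rcases Nat.eq_zero_or_pos d with rfl | hd
    · simp -- `α * n / 0 = 0`
    have : Nontrivial (EuclideanSpace ℝ (Fin d)) :=
      Module.nontrivial_of_finrank_pos (R := ℝ) (by rwa [finrank_euclideanSpace_fin])
    obtain ⟨a, ha, hcount⟩ :=
      exists_ne_zero_card_filter_inner_le_card_mul_finrank (fun C hC => (h𝒞 C hC).2) hrest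
    rw [finrank_euclideanSpace_fin] at hcount
    rw [Nat.ceil_le, div_le_iff₀ (by exact_mod_cast hd)]
    calc α * n ≤ #(X.filter fun x => inner ℝ a z ≤ inner ℝ a x) :=
          (hcenter a _ ha le_rfl).trans_eq (by rw [← Set.ncard_coe_finset, coe_filter]; rfl)
      _ ≤ #𝒞 * d := by exact_mod_cast hcount
  · exact 𝒞.equivFin.symm.injective (Subtype.ext h)
  · simpa using (h𝒞 _ (hC i)).2.card_le_finrank_add_one

/-- From an `α`-centerpoint one obtains at least `⌈αn/d⌉` pairwise disjoint
subsets of `X`, each of size at most `d+1`, whose convex hulls all contain `z`. -/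
theorem centerpoint_gives_tverberg (d : ℕ) (α : ℝ)
    (X : Finset (EuclideanSpace ℝ (Fin d))) (n : ℕ) (hn : X.card = n)
    (z : EuclideanSpace ℝ (Fin d))
    (hzX : z ∈ convexHull ℝ (X : Set (EuclideanSpace ℝ (Fin d))))
    (hcenter : ∀ (a : EuclideanSpace ℝ (Fin d)) (b : ℝ), a ≠ 0 → b ≤ (inner ℝ a z : ℝ) →
      α * n ≤ (((X : Set (EuclideanSpace ℝ (Fin d))) ∩ {x | b ≤ (inner ℝ a x : ℝ)}).ncard : ℝ)) :
    ∃ (m : ℕ) (C : Fin m → Finset (EuclideanSpace ℝ (Fin d))),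
      ⌈α * n / d⌉₊ ≤ m ∧
      (∀ i j, i ≠ j → Disjoint (C i) (C j)) ∧
      (∀ i, C i ⊆ X) ∧
      (∀ i, (C i).card ≤ d + 1) ∧
      (∀ i, z ∈ convexHull ℝ (C i : Set (EuclideanSpace ℝ (Fin d)))) :=
  centerpoint_gives_tverberg_general d α X n z hcenter
end

section
/- For any finite set S of points in Z^d, there exists a point z ∈ Z^d such that every closed half-space containing z contains at least ⌈|S|/2^d⌉ points of S. -/
/-!
The proof is Doignon's integer Helly theorem applied to the convex hulls of the subsets
`T ⊆ S` with `|T| = |S| - k + 1`, where `k = ⌈|S| / 2^d⌉`. Each such `T` misses only `k - 1`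
points of `S`, and `2^d (k - 1) < |S|`, so any `2^d` of them share a point of `S`. Doignon
yields a lattice point `z` in all the hulls; a closed half-space containing `z` but fewer than
`k` points of `S` would leave `|S| - k + 1` points in the complementary open half-space, whose
hull then misses `z`.

Doignon's theorem is proved inside a finite box of lattice points, which is closed under integer
midpoints. Each convex set is replaced by the hull of its lattice points in the box
and separated strictly from each lattice point it misses, which reduces the claim to strict
half-spaces. For a minimal infeasible system of more than `2^d` strict half-spaces, raise the
constraints one at a time as far as infeasibility allows: each then becomes attained by a lattice
point satisfying all the others. Two of these witnesses agree mod 2, and their midpoint satisfies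
every constraint.
-/

open Finset

def intLattice (d : ℕ) : (Fin d → ℤ) →+ EuclideanSpace ℝ (Fin d) where
  toFun v := WithLp.toLp 2 fun i => (v i : ℝ)
  map_zero' := by ext; simp
  map_add' v w := by ext; simp

@[simp]
theorem intLattice_apply {d : ℕ} (v : Fin d → ℤ) (i : Fin d) : intLattice d v i = v i := rfl

theorem exists_intLattice_eq {d : ℕ} {x : EuclideanSpace ℝ (Fin d)}
    (hx : ∀ i, ∃ m : ℤ, x i = m) : ∃ v, intLattice d v = x := by
  choose v hv using hx
  exact ⟨v, by ext i; simp [hv]⟩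

namespace Doignon

variable {d : ℕ} {ι : Type*}

def IsMidpointClosed (B : Finset (Fin d → ℤ)) : Prop :=
  ∀ x ∈ B, ∀ y ∈ B, ∀ m, x + y = 2 • m → m ∈ B

theorem isMidpointClosed_Icc (a b : Fin d → ℤ) : IsMidpointClosed (Finset.Icc a b) := by
  intro x hx y hy m hm
  simp only [Finset.mem_Icc, Pi.le_def] at hx hy ⊢
  have hm' : ∀ t, x t + y t = 2 * m t := fun t => by simpa using congrFun hm t
  exact ⟨fun t => by linarith [hx.1 t, hy.1 t, hm' t],
    fun t => by linarith [hx.2 t, hy.2 t, hm' t]⟩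

theorem exists_isMidpointClosed_superset (W : Finset (Fin d → ℤ)) :
    ∃ B, W ⊆ B ∧ IsMidpointClosed B := by
  obtain ⟨a, ha⟩ := W.bddBelow
  obtain ⟨b, hb⟩ := W.bddAbove
  exact ⟨Finset.Icc a b, fun x hx => Finset.mem_Icc.2 ⟨ha hx, hb hx⟩,
    isMidpointClosed_Icc a b⟩

theorem exists_ne_add_eq_two_nsmul {J : Finset ι} (hJ : 2 ^ d < J.card)
    (w : ι → Fin d → ℤ) :
    ∃ i ∈ J, ∃ j ∈ J, i ≠ j ∧ ∃ m, w i + w j = 2 • m := by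
  have hcard : (univ : Finset (Fin d → ZMod 2)).card < J.card := by simpa using hJ
  obtain ⟨i, hi, j, hj, hij, hpar⟩ := exists_ne_map_eq_of_card_lt_of_maps_to hcard
    (f := fun i t => ((w i t : ℤ) : ZMod 2)) (fun _ _ => mem_coe.2 (mem_univ _))
  have hdvd : ∀ t, (2 : ℤ) ∣ w i t - w j t := fun t =>
    (ZMod.intCast_eq_intCast_iff_dvd_sub _ _ 2).1 (congrFun hpar t).symm
  choose q hq using hdvd
  refine ⟨i, hi, j, hj, hij, w j + q, funext fun t => ?_⟩
  simp only [Pi.add_apply, Pi.smul_apply, nsmul_eq_mul, Nat.cast_ofNat]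
  linarith [hq t]

theorem lt_of_add_eq_two_nsmul {f : (Fin d → ℤ) →+ ℝ} {x y m : Fin d → ℤ} {r : ℝ}
    (hm : x + y = 2 • m) (hx : f x ≤ r) (hy : f y < r) : f m < r := by
  have : f x + f y = 2 * f m := by rw [← map_add, hm, map_nsmul, nsmul_eq_mul, Nat.cast_ofNat]
  linarith

variable (B : Finset (Fin d → ℤ)) (φ : ι → (Fin d → ℤ) →+ ℝ)

def Feasible (c : ι → ℝ) (J : Finset ι) : Prop :=
  ∃ z ∈ B, ∀ i ∈ J, φ i z < c i

variable {B φ}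

theorem Feasible.mono {c c' : ι → ℝ} {J J' : Finset ι} (h : Feasible B φ c J) (hc : c ≤ c')
    (hJ : J' ⊆ J) : Feasible B φ c' J' :=
  let ⟨z, hzB, hz⟩ := h
  ⟨z, hzB, fun i hi => (hz i (hJ hi)).trans_le (hc i)⟩

variable [DecidableEq ι]

theorem exists_update_not_feasible {c : ι → ℝ} {J : Finset ι} {i : ι}
    (hJ : ¬Feasible B φ c J) (hi : Feasible B φ c (J.erase i)) :
    ∃ w ∈ B, (∀ l ∈ J.erase i, φ l w < c l) ∧ c i ≤ φ i w ∧
      ¬Feasible B φ (Function.update c i (φ i w)) J := by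
  classical
  obtain ⟨w, hw, hmin⟩ := (B.filter fun z => ∀ l ∈ J.erase i, φ l z < c l).exists_min_image
    (φ i) (let ⟨z, hzB, hz⟩ := hi; ⟨z, mem_filter.2 ⟨hzB, hz⟩⟩)
  obtain ⟨hwB, hwJ⟩ := mem_filter.1 hw
  refine ⟨w, hwB, hwJ, ?_, ?_⟩
  · by_contra! hlt
    refine hJ ⟨w, hwB, fun l hl => ?_⟩
    by_cases hli : l = i
    · exact hli ▸ hlt
    · exact hwJ l (mem_erase.2 ⟨hli, hl⟩)
  · rintro ⟨z, hzB, hz⟩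
    have hzJ : ∀ l ∈ J.erase i, φ l z < c l := fun l hl => by
      simpa [Function.update_of_ne (ne_of_mem_erase hl)] using hz l (mem_of_mem_erase hl)
    have hiJ : i ∈ J := by
      by_contra hiJ
      exact hJ (by rwa [erase_eq_of_notMem hiJ] at hi)
    have hzi : φ i z < φ i w := by simpa using hz i hiJ
    exact (hmin z (mem_filter.2 ⟨hzB, hzJ⟩)).not_gt hzi

theorem exists_relaxation {c : ι → ℝ} {J : Finset ι} (hJ : ¬Feasible B φ c J)
    (herase : ∀ i ∈ J, Feasible B φ c (J.erase i)) :
    ∃ c', c ≤ c' ∧ ¬Feasible B φ c' J ∧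
      ∀ i ∈ J, ∃ w ∈ B, φ i w = c' i ∧ ∀ l ∈ J.erase i, φ l w < c' l := by
  suffices ∀ K ⊆ J, ∃ c', c ≤ c' ∧ ¬Feasible B φ c' J ∧
      ∀ i ∈ K, ∃ w ∈ B, φ i w = c' i ∧ ∀ l ∈ J.erase i, φ l w < c' l from
    this J subset_rfl
  intro K
  induction K using Finset.induction_on with
  | empty => exact fun _ => ⟨c, le_rfl, hJ, by simp⟩
  | @insert i K hiK ih =>
    intro hsub
    obtain ⟨c', hcc', hJ', hK⟩ := ih ((subset_insert i K).trans hsub)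
    obtain ⟨w, hwB, hwJ, hci, hJ''⟩ := exists_update_not_feasible hJ'
      ((herase i (hsub (mem_insert_self i K))).mono hcc' subset_rfl)
    have hc'c'' : c' ≤ Function.update c' i (φ i w) := by
      intro l
      rcases eq_or_ne l i with rfl | hli
      · simpa using hci
      · simp [hli]
    refine ⟨_, hcc'.trans hc'c'', hJ'', fun l hl => ?_⟩
    rcases mem_insert.1 hl with rfl | hlK
    · exact ⟨w, hwB, by simp, fun l' hl' => by simpa [ne_of_mem_erase hl'] using hwJ l' hl'⟩
    · obtain ⟨v, hvB, hvl, hv⟩ := hK l hlK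
      have hli : l ≠ i := fun h => hiK (h ▸ hlK)
      exact ⟨v, hvB, by simpa [hli] using hvl, fun l' hl' => (hv l' hl').trans_le (hc'c'' l')⟩

theorem feasible_of_forall_card_le (hB : IsMidpointClosed B) (c : ι → ℝ) (J : Finset ι)
    (h : ∀ K ⊆ J, K.card ≤ 2 ^ d → Feasible B φ c K) : Feasible B φ c J := by
  induction J using Finset.strongInduction with
  | _ J ih =>
  by_cases hcard : J.card ≤ 2 ^ d
  · exact h J subset_rfl hcard
  by_contra hJ
  have herase : ∀ i ∈ J, Feasible B φ c (J.erase i) := fun i hi =>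
    ih _ (erase_ssubset hi) fun K hK => h K (hK.trans (erase_subset i J))
  obtain ⟨c', -, hJ', hw⟩ := exists_relaxation hJ herase
  choose! w hwB hwi hwl using hw
  obtain ⟨i, hi, j, hj, hij, m, hm⟩ := exists_ne_add_eq_two_nsmul (not_le.1 hcard) w
  have hle : ∀ k ∈ J, ∀ l ∈ J, φ l (w k) ≤ c' l := fun k hk l hl => by
    rcases eq_or_ne l k with rfl | hlk
    · exact (hwi l hk).le
    · exact (hwl k hk l (mem_erase.2 ⟨hlk, hl⟩)).le
  refine hJ' ⟨m, hB _ (hwB i hi) _ (hwB j hj) m hm, fun l hl => ?_⟩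
  rcases eq_or_ne l j with rfl | hlj
  · rw [add_comm] at hm
    exact lt_of_add_eq_two_nsmul hm (hle l hj l hl) (hwl i hi l (mem_erase.2 ⟨hij.symm, hl⟩))
  · exact lt_of_add_eq_two_nsmul hm (hle i hi l hl) (hwl j hj l (mem_erase.2 ⟨hlj, hl⟩))

theorem exists_forall_mem_of_isMidpointClosed (hB : IsMidpointClosed B)
    (K : ι → Set (EuclideanSpace ℝ (Fin d))) (hK : ∀ i, Convex ℝ (K i))
    (h : ∀ J : Finset ι, J.card ≤ 2 ^ d → ∃ z ∈ B, ∀ i ∈ J, intLattice d z ∈ K i) :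
    ∃ z ∈ B, ∀ i, intLattice d z ∈ K i := by
  classical
  by_contra! hbad
  choose bad hbad using fun z : B => hbad z z.2
  set P : ι → Set (EuclideanSpace ℝ (Fin d)) :=
    fun i => convexHull ℝ (intLattice d '' {z ∈ B | intLattice d z ∈ K i})
  have hPK : ∀ z ∈ B, ∀ i, intLattice d z ∈ K i → intLattice d z ∈ P i :=
    fun z hz i hzK => subset_convexHull ℝ _ ⟨z, ⟨hz, hzK⟩, rfl⟩
  have hbadP : ∀ z : B, intLattice d z ∉ P (bad z) := fun z hzP =>
    hbad z (convexHull_min (Set.image_subset_iff.2 fun _ hy => hy.2) (hK _) hzP)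
  have hPclosed : ∀ i, IsClosed (P i) := fun i =>
    ((B.finite_toSet.subset fun _ hy => hy.1).image _).isClosed_convexHull ℝ
  choose f u hfP hfz using fun z : B =>
    geometric_hahn_banach_closed_point (convex_convexHull ℝ _) (hPclosed _) (hbadP z)
  set φ : B → (Fin d → ℤ) →+ ℝ :=
    fun y => (f y).toLinearMap.toAddMonoidHom.comp (intLattice d)
  obtain ⟨z, hzB, hz⟩ := feasible_of_forall_card_le (φ := φ) hB u univ fun J _ hJ => by
    obtain ⟨z, hzB, hz⟩ := h (J.image bad) (card_image_le.trans hJ)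
    exact ⟨z, hzB, fun y hy => hfP y _ (hPK z hzB _ (hz _ (mem_image_of_mem _ hy)))⟩
  exact (hfz ⟨z, hzB⟩).not_gt (hz ⟨z, hzB⟩ (mem_univ _))

end Doignon

theorem doignon_s6 {d : ℕ} {ι : Type*} [Fintype ι] (K : ι → Set (EuclideanSpace ℝ (Fin d)))
    (hK : ∀ i, Convex ℝ (K i))
    (h : ∀ J : Finset ι, J.card ≤ 2 ^ d → ∃ z, ∀ i ∈ J, intLattice d z ∈ K i) :
    ∃ z, ∀ i, intLattice d z ∈ K i := by
  classical
  choose w hw using fun J : {J : Finset ι // J.card ≤ 2 ^ d} => h J.1 J.2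
  obtain ⟨B, hWB, hB⟩ := Doignon.exists_isMidpointClosed_superset (univ.image w)
  obtain ⟨z, -, hz⟩ := Doignon.exists_forall_mem_of_isMidpointClosed hB K hK fun J hJ =>
    ⟨w ⟨J, hJ⟩, hWB (mem_image_of_mem w (mem_univ _)), hw ⟨J, hJ⟩⟩
  exact ⟨z, hz⟩

theorem Finset.exists_mem_forall_mem_of_card_mul_lt {α ι : Type*} [DecidableEq α]
    {S : Finset α} {J : Finset ι} {T : ι → Finset α} {e : ℕ}
    (hT : ∀ i ∈ J, (S \ T i).card ≤ e) (h : J.card * e < S.card) :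
    ∃ s ∈ S, ∀ i ∈ J, s ∈ T i := by
  obtain ⟨s, hsS, hs⟩ :=
    exists_mem_notMem_of_card_lt_card ((card_biUnion_le_card_mul J _ e hT).trans_lt h)
  exact ⟨s, hsS, fun i hi => by_contra fun hsT =>
    hs (mem_biUnion.2 ⟨i, hi, mem_sdiff.2 ⟨hsS, hsT⟩⟩)⟩

theorem lt_card_filter_add_of_forall_mem_convexHull {E : Type*} [AddCommGroup E] [Module ℝ E]
    {S : Finset E} {p : ℕ} {z : E}
    (hz : ∀ T ∈ S.powersetCard p, z ∈ convexHull ℝ (T : Set E)) (f : E →ₗ[ℝ] ℝ) {b : ℝ}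
    (hb : b ≤ f z) : S.card < (S.filter (b ≤ f ·)).card + p := by
  classical
  by_contra! hle
  have hp : p ≤ (S.filter fun x => ¬b ≤ f x).card := by
    have := card_filter_add_card_filter_not (s := S) (b ≤ f ·)
    omega
  obtain ⟨T, hTS, hTp⟩ := exists_subset_card_eq hp
  have hTlt : (T : Set E) ⊆ {x | f x < b} := fun x hx => not_le.1 (mem_filter.1 (hTS hx)).2
  have hzlt := convexHull_min hTlt (convex_halfSpace_lt f.isLinear b)
    (hz T (mem_powersetCard.2 ⟨hTS.trans (filter_subset _ _), hTp⟩))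
  exact (not_lt.2 hb) hzlt

theorem mul_ceil_div_sub_one_lt {m n : ℕ} (hm : 0 < m) (hn : 0 < n) :
    m * (⌈(n : ℝ) / m⌉₊ - 1) < n := by
  rcases Nat.eq_zero_or_pos ⌈(n : ℝ) / m⌉₊ with h0 | hpos
  · simpa [h0] using hn
  have := Nat.lt_ceil.1 (Nat.sub_one_lt_of_lt hpos)
  rw [lt_div_iff₀ (by positivity)] at this
  exact_mod_cast (mul_comm _ _).trans_lt this

/-- Integer centerpoint: any finite set `S` of integer points in `ℝ^d` has an
integer point `z` such that every closed half-space containing `z` contains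
at least `⌈|S|/2^d⌉` points of `S`. -/
theorem integer_centerpoint (d : ℕ) (S : Finset (EuclideanSpace ℝ (Fin d)))
    (hS : ∀ x ∈ S, ∀ i : Fin d, ∃ m : ℤ, x i = (m : ℝ)) :
    ∃ z : EuclideanSpace ℝ (Fin d),
      (∀ i : Fin d, ∃ m : ℤ, z i = (m : ℝ)) ∧
      ∀ (a : EuclideanSpace ℝ (Fin d)) (b : ℝ), a ≠ 0 → b ≤ (inner ℝ a z : ℝ) →
        ⌈(S.card : ℝ) / 2 ^ d⌉₊ ≤
          ((S : Set (EuclideanSpace ℝ (Fin d))) ∩ {x | b ≤ (inner ℝ a x : ℝ)}).ncard := by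
  rcases S.eq_empty_or_nonempty with rfl | hSne
  · exact ⟨0, fun _ => ⟨0, by simp⟩, by simp⟩
  set k := ⌈(S.card : ℝ) / 2 ^ d⌉₊
  have hkS : k ≤ S.card :=
    Nat.ceil_le.2 (div_le_self (Nat.cast_nonneg _) (one_le_pow₀ one_le_two))
  have hcount : 2 ^ d * (k - 1) < S.card := by
    simpa using mul_ceil_div_sub_one_lt (m := 2 ^ d) (by positivity) hSne.card_pos
  obtain ⟨z, hz⟩ := doignon_s6 (fun T : S.powersetCard (S.card - k + 1) =>
      convexHull ℝ (T.1 : Set (EuclideanSpace ℝ (Fin d))))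
    (fun _ => convex_convexHull ℝ _) fun J hJ => by
      classical
      obtain ⟨s, hsS, hs⟩ :=
        exists_mem_forall_mem_of_card_mul_lt (T := Subtype.val) (e := k - 1)
          (fun T _ => by
            rw [card_sdiff_of_subset (mem_powersetCard.1 T.2).1, (mem_powersetCard.1 T.2).2]
            omega)
          ((Nat.mul_le_mul_right _ hJ).trans_lt hcount)
      obtain ⟨v, rfl⟩ := exists_intLattice_eq (hS s hsS)
      exact ⟨v, fun T hT => subset_convexHull ℝ _ (mem_coe.2 (hs T hT))⟩
  refine ⟨intLattice d z, fun i => ⟨z i, rfl⟩, fun a b _ hb => ?_⟩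
  have hcard := lt_card_filter_add_of_forall_mem_convexHull (fun T hT => hz ⟨T, hT⟩)
    (innerₛₗ ℝ a) hb
  have hset : (S : Set (EuclideanSpace ℝ (Fin d))) ∩ {x | b ≤ inner ℝ a x} =
      ↑(S.filter (b ≤ innerₛₗ ℝ a ·)) := by
    ext x; rw [mem_coe, mem_filter]; rfl
  rw [hset, Set.ncard_coe_finset]
  omega
end

section
/- Let F be a finite family of convex sets in R^d. If every subfamily of F of size at most 2^d has a common point with integer coordinates, then the intersection of all sets in F contains a point with integer coordinates. -/
/-!
Call `v` a core point of a family `p : ι → ℝ^d` if, for every `i`, it lies in the convex hull of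
the `p j` with `j ≠ i`. If every `|F| - 1` members of `F` share an integer point, choosing one such
point `p K` for each omitted `K` gives a family whose core points lie in every `K ∈ F`. So, by
induction on `|F|`, it suffices that more than `2^d` integer points always have an integer core
point.

This is proved by descent on the number of integer points in the convex hull of the family. If some
`p i` lies in the hull of the others, it is a core point. Otherwise, by pigeonhole on parities, two
points `p i₁ ≠ p i₂` have an integer midpoint `y`; replace `p i₁` by `y`, take an integer core point
`v₀` of the new family, and replace `p i₂` by `v₀`. Each replacement puts a point of the hull in
place of a vertex, so the new hull lies in the old one and, by an exchange argument, misses that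
vertex. A core point of the final family is a core point of `p`, since `y` lies in the hull of the
`p j, j ≠ i` for every `i ∉ {i₁, i₂}`, and `v₀` for every `i ≠ i₂`.
-/

open Set Function

theorem Convex.mem_of_mem_convexHull_insert_swap {E : Type*} [AddCommGroup E] [Module ℝ E]
    {A : Set E} (hA : Convex ℝ A) {x z : E} (hz : z ∈ convexHull ℝ (insert x A)) (hzx : z ≠ x)
    (hx : x ∈ convexHull ℝ (insert z A)) : x ∈ A := by
  rcases A.eq_empty_or_nonempty with rfl | hne
  · simp_all
  rw [convexHull_insert hne, hA.convexHull_eq, convexJoin_singleton_left, mem_iUnion₂] at hz hx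
  obtain ⟨c, hc, s, t, hs, ht, hst, hz⟩ := hz
  obtain ⟨c', hc', p, q, hp, hq, hpq, hx⟩ := hx
  have hr : 0 < p * t + q := by
    by_contra! h
    have hq0 : q = 0 := by nlinarith
    have ht0 : t = 0 := by nlinarith
    apply hzx
    rw [← hz, ht0, zero_smul, add_zero, (by linarith : s = 1), one_smul]
  have key : x = (p * t / (p * t + q)) • c + (q / (p * t + q)) • c' := by
    have hrx : (p * t + q) • x = (p * t) • c + q • c' := by
      rw [← hz] at hx
      linear_combination (norm := module) -hx + hst • (p • x) + hpq • x
    rw [← inv_smul_smul₀ hr.ne' x, hrx]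
    module
  rw [key]
  exact hA hc hc' (by positivity) (by positivity) (by field_simp)

theorem Set.range_update_eq_insert_image_compl {α β : Type*} [DecidableEq α] (f : α → β) (a : α)
    (b : β) : range (update f a b) = insert b (f '' {a}ᶜ) := by
  rw [← insert_image_compl_eq_range, update_self]
  congr 1
  exact image_congr fun j hj => update_of_ne hj b f

namespace Doignon

section HullExcept

variable {ι E : Type*} [AddCommGroup E] [Module ℝ E]

def hullExcept (p : ι → E) (i : ι) : Set E := convexHull ℝ (p '' {i}ᶜ)

theorem hullExcept_subset_convexHull_range (p : ι → E) (i : ι) :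
    hullExcept p i ⊆ convexHull ℝ (range p) :=
  convexHull_mono (image_subset_range p _)

variable {p : ι → E} {u : ι} {z : E}

theorem mem_iInter_hullExcept_of_mem_hullExcept {i : ι} (hi : p i ∈ hullExcept p i) :
    p i ∈ ⋂ j, hullExcept p j := by
  refine mem_iInter.2 fun j => ?_
  rcases eq_or_ne j i with rfl | hji
  · exact hi
  · exact subset_convexHull ℝ _ ⟨i, hji.symm, rfl⟩

theorem midpoint_mem_hullExcept {i₁ i₂ j : ι} (h₁ : j ≠ i₁) (h₂ : j ≠ i₂) :
    midpoint ℝ (p i₁) (p i₂) ∈ hullExcept p j :=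
  segment_subset_convexHull (mem_image_of_mem p h₁.symm) (mem_image_of_mem p h₂.symm)
    (midpoint_mem_segment _ _)

variable [DecidableEq ι]

theorem hullExcept_update_self (p : ι → E) (u : ι) (z : E) :
    hullExcept (update p u z) u = hullExcept p u := by
  unfold hullExcept
  congr 1
  exact image_congr fun j hj => update_of_ne hj z p

theorem hullExcept_update_subset {j : ι} (hz : z ∈ hullExcept p j) :
    hullExcept (update p u z) j ⊆ hullExcept p j := by
  refine convexHull_min ?_ (convex_convexHull ℝ _)
  rintro _ ⟨k, hk, rfl⟩
  rcases eq_or_ne k u with rfl | hku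
  · rwa [update_self]
  · rw [update_of_ne hku]
    exact subset_convexHull ℝ _ ⟨k, hk, rfl⟩

theorem mem_hullExcept_of_mem_iInter_update {v : E} {j : ι}
    (hv : v ∈ ⋂ k, hullExcept (update p u z) k) (hj : j = u ∨ z ∈ hullExcept p j) :
    v ∈ hullExcept p j := by
  have hvj := mem_iInter.1 hv j
  rcases hj with rfl | hz
  · rwa [hullExcept_update_self] at hvj
  · exact hullExcept_update_subset hz hvj

theorem convexHull_range_update_subset (hz : z ∈ convexHull ℝ (range p)) :
    convexHull ℝ (range (update p u z)) ⊆ convexHull ℝ (range p) := by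
  refine convexHull_min ?_ (convex_convexHull ℝ _)
  rw [range_update_eq_insert_image_compl]
  exact insert_subset hz ((image_subset_range p _).trans (subset_convexHull ℝ _))

theorem notMem_convexHull_range_update (hu : p u ∉ hullExcept p u)
    (hz : z ∈ convexHull ℝ (range p)) (hzu : z ≠ p u) :
    p u ∉ convexHull ℝ (range (update p u z)) := by
  refine fun hmem => hu ((convex_convexHull ℝ _).mem_of_mem_convexHull_insert_swap ?_ hzu ?_)
  · refine convexHull_mono ?_ hz
    rw [← insert_image_compl_eq_range]
    exact insert_subset_insert (subset_convexHull ℝ _)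
  · refine convexHull_mono ?_ hmem
    rw [range_update_eq_insert_image_compl]
    exact insert_subset_insert (subset_convexHull ℝ _)

theorem hullExcept_update_subset_convexHull_range_update {i j : ι} (hij : i ≠ j) :
    hullExcept (update p i z) j ⊆ convexHull ℝ (range (update p j z)) := by
  refine convexHull_mono ?_
  rintro _ ⟨k, hk, rfl⟩
  rcases eq_or_ne k i with rfl | hki
  · exact ⟨j, by simp⟩
  · exact ⟨k, by simp [update_of_ne hk, update_of_ne hki]⟩

end HullExcept

variable {d : ℕ}

def intPoints (d : ℕ) : Set (EuclideanSpace ℝ (Fin d)) := {z | ∀ i, ∃ m : ℤ, z i = m}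

theorem finite_inter_intPoints {S : Set (EuclideanSpace ℝ (Fin d))}
    (hS : Bornology.IsBounded S) : (S ∩ intPoints d).Finite := by
  obtain ⟨R, hR⟩ := isBounded_iff_forall_norm_le.1 hS
  refine ((finite_Icc (fun _ => -⌈R⌉) (fun _ => ⌈R⌉)).image
    fun m : Fin d → ℤ => WithLp.toLp 2 fun i => (m i : ℝ)).subset ?_
  rintro z ⟨hzS, hz⟩
  choose m hm using hz
  have hbound : ∀ i, |m i| ≤ ⌈R⌉ := fun i => by
    have : |(m i : ℝ)| ≤ R := by
      rw [← hm i, ← Real.norm_eq_abs]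
      exact (PiLp.norm_apply_le z i).trans (hR z hzS)
    exact_mod_cast this.trans (Int.le_ceil R)
  refine ⟨m, ⟨fun i => neg_le_of_abs_le (hbound i), fun i => le_of_abs_le (hbound i)⟩, ?_⟩
  ext i
  exact (hm i).symm

theorem exists_ne_midpoint_mem_intPoints {ι : Type*} [Fintype ι]
    {p : ι → EuclideanSpace ℝ (Fin d)} (hp : ∀ i, p i ∈ intPoints d)
    (hcard : 2 ^ d < Fintype.card ι) :
    ∃ i j, i ≠ j ∧ midpoint ℝ (p i) (p j) ∈ intPoints d := by
  choose m hm using hp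
  obtain ⟨i, j, hij, hparity⟩ := Fintype.exists_ne_map_eq_of_card_lt
    (fun i k => (m i k : ZMod 2)) (by simpa [ZMod.card] using hcard)
  refine ⟨i, j, hij, fun k => ?_⟩
  obtain ⟨c, hc⟩ := (ZMod.intCast_eq_intCast_iff_dvd_sub _ _ 2).1 (congrFun hparity k)
  refine ⟨m i k + c, ?_⟩
  rw [midpoint_eq_smul_add]
  have hc' : (m j k : ℝ) - m i k = 2 * c := by exact_mod_cast hc
  simp only [PiLp.smul_apply, PiLp.add_apply, hm, smul_eq_mul, invOf_eq_inv]
  push_cast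
  linarith

noncomputable def intPointCount {ι : Type*} (p : ι → EuclideanSpace ℝ (Fin d)) : ℕ :=
  (convexHull ℝ (range p) ∩ intPoints d).ncard

theorem intPointCount_update_lt {ι : Type*} [Finite ι] [DecidableEq ι]
    {p : ι → EuclideanSpace ℝ (Fin d)} {u : ι} {z : EuclideanSpace ℝ (Fin d)}
    (hpu : p u ∈ intPoints d) (hu : p u ∉ hullExcept p u)
    (hz : z ∈ convexHull ℝ (range p)) (hzu : z ≠ p u) :
    intPointCount (update p u z) < intPointCount p := by
  refine ncard_lt_ncard ?_
    (finite_inter_intPoints (isBounded_convexHull.2 (finite_range p).isBounded))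
  refine (ssubset_iff_of_subset (inter_subset_inter_left _ (convexHull_range_update_subset hz))).2
    ⟨p u, ⟨subset_convexHull ℝ _ (mem_range_self u), hpu⟩, fun h => ?_⟩
  exact notMem_convexHull_range_update hu hz hzu h.1

theorem exists_mem_intPoints_iInter_hullExcept {ι : Type*} [Fintype ι] [DecidableEq ι]
    (hcard : 2 ^ d < Fintype.card ι) (p : ι → EuclideanSpace ℝ (Fin d))
    (hp : ∀ i, p i ∈ intPoints d) : ∃ v ∈ intPoints d, v ∈ ⋂ i, hullExcept p i := by
  induction h : intPointCount p using Nat.strong_induction_on generalizing p with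
  | _ n ih =>
  have descend : ∀ u z, z ∈ intPoints d → p u ∉ hullExcept p u → z ∈ convexHull ℝ (range p) →
      z ≠ p u → ∃ v ∈ intPoints d, v ∈ ⋂ i, hullExcept (update p u z) i :=
    fun u z hz hu hzp hzu => ih _ (h ▸ intPointCount_update_lt (hp u) hu hzp hzu) _
      (fun i => by rcases eq_or_ne i u with rfl | hiu <;> simp [*]) rfl
  by_cases hvert : ∃ i, p i ∈ hullExcept p i
  · obtain ⟨i, hi⟩ := hvert
    exact ⟨p i, hp i, mem_iInter_hullExcept_of_mem_hullExcept hi⟩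
  push Not at hvert
  obtain ⟨i₁, i₂, hne, hy⟩ := exists_ne_midpoint_mem_intPoints hp hcard
  set y := midpoint ℝ (p i₁) (p i₂)
  have hy_range : y ∈ convexHull ℝ (range p) :=
    segment_subset_convexHull (mem_range_self _) (mem_range_self _) (midpoint_mem_segment _ _)
  have hp₁₂ : p i₁ ≠ p i₂ := fun h => hvert i₁ (h ▸ subset_convexHull ℝ _ ⟨i₂, hne.symm, rfl⟩)
  have hy₁ : y ≠ p i₁ := fun h => hp₁₂ ((midpoint_eq_left_iff ℝ).1 h)
  have hy₂ : y ≠ p i₂ := fun h => hp₁₂ ((midpoint_eq_right_iff ℝ).1 h)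
  obtain ⟨v₀, hv₀, hv₀core⟩ := descend i₁ y hy (hvert i₁) hy_range hy₁
  have hv₀_hull : ∀ j ≠ i₂, v₀ ∈ hullExcept p j := fun j hj₂ =>
    mem_hullExcept_of_mem_iInter_update hv₀core
      ((eq_or_ne j i₁).imp_right fun hj₁ => midpoint_mem_hullExcept hj₁ hj₂)
  have hv₀₂ : v₀ ≠ p i₂ := by
    rintro rfl
    exact notMem_convexHull_range_update (hvert i₂) hy_range hy₂
      (hullExcept_update_subset_convexHull_range_update hne (mem_iInter.1 hv₀core i₂))
  obtain ⟨v, hv, hvcore⟩ := descend i₂ v₀ hv₀ (hvert i₂)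
    (hullExcept_subset_convexHull_range p i₁ (hv₀_hull i₁ hne)) hv₀₂
  exact ⟨v, hv, mem_iInter.2 fun j =>
    mem_hullExcept_of_mem_iInter_update hvcore ((eq_or_ne j i₂).imp_right (hv₀_hull j))⟩

end Doignon

/-- Doignon's theorem: if every at most `2^d` members of a finite family of
convex sets in `ℝ^d` have a common integer point, then the whole family has a
common integer point. -/
theorem doignon (d : ℕ) (F : Finset (Set (EuclideanSpace ℝ (Fin d))))
    (hconv : ∀ K ∈ F, Convex ℝ K)
    (hint : ∀ G ⊆ F, G.card ≤ 2 ^ d →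
      ∃ z : EuclideanSpace ℝ (Fin d), (∀ i : Fin d, ∃ m : ℤ, z i = (m : ℝ)) ∧ ∀ K ∈ G, z ∈ K) :
    ∃ z : EuclideanSpace ℝ (Fin d),
      (∀ i : Fin d, ∃ m : ℤ, z i = (m : ℝ)) ∧ ∀ K ∈ F, z ∈ K := by
  classical
  induction F using Finset.strongInduction with
  | H F ih =>
  by_cases hF : F.card ≤ 2 ^ d
  · exact hint F subset_rfl hF
  have hp : ∀ K : F, ∃ z ∈ Doignon.intPoints d, ∀ L ∈ F.erase K, z ∈ L := fun K =>
    ih (F.erase K) (Finset.erase_ssubset K.2) (fun L hL => hconv L (Finset.mem_of_mem_erase hL))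
      (fun G hG => hint G (hG.trans (Finset.erase_subset _ _)))
  choose p hpint hpmem using hp
  obtain ⟨v, hv, hvcore⟩ := Doignon.exists_mem_intPoints_iInter_hullExcept
    (by simpa using not_le.1 hF) p hpint
  refine ⟨v, hv, fun K hK => convexHull_min ?_ (hconv K hK) (mem_iInter.1 hvcore ⟨K, hK⟩)⟩
  rintro _ ⟨L, hL, rfl⟩
  exact hpmem L K (Finset.mem_erase.2 ⟨fun h => hL (Subtype.ext h.symm), hK⟩)
end

section
/- Let G be a finite tree on n vertices and U a set of 2k vertices of G. Then there exists a partition of U into k pairs {u_i, v_i} and a vertex p of G such that p lies on the (unique) path between u_i and v_i for every i. Consequently, the geodesic convex hulls of the k pairs have a common vertex. -/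
/-!
Take `p` to be a median of `U`, i.e. a vertex minimising `∑ u ∈ U, dist p u`, and sort the vertices
of `U` by their first step on the path from `p` (`p` itself forms a class of its own). Moving `p`
one step towards a class `B` shortens the distances to `B` and lengthens the others by at most one,
so minimality gives `2 * #B ≤ #U`. A multiset of size `2k` with no class larger than `k` can be
split into `k` pairs from distinct classes, and in a tree the path between vertices of distinct
classes runs through `p`.
-/

open Finset

namespace Multiset

variable {α β : Type*} [DecidableEq β] (c : α → β)

/-- Peel off an element `x` of a largest class together with any `y` outside that class. -/
theorem exists_eq_cons_cons_countP_le {k : ℕ} {s : Multiset α} (hs : card s = 2 * (k + 1))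
    (h : ∀ b, s.countP (c · = b) ≤ k + 1) :
    ∃ x y t, s = x ::ₘ y ::ₘ t ∧ c x ≠ c y ∧ ∀ b, t.countP (c · = b) ≤ k := by
  classical
  obtain ⟨x, hxs, hx⟩ := s.toFinset.exists_max_image (fun y => s.countP (c · = c y))
    (toFinset_nonempty.2 (card_pos.1 (by omega)))
  have hmax : ∀ b, s.countP (c · = b) ≤ s.countP (c · = c x) := by
    intro b
    rcases (s.countP (c · = b)).eq_zero_or_pos with h0 | hpos
    · omega
    obtain ⟨y, hys, rfl⟩ := countP_pos.1 hpos
    exact hx y (mem_toFinset.2 hys)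
  obtain ⟨y, hys, hyx⟩ : ∃ y ∈ s, c y ≠ c x := by
    by_contra! hall
    have := countP_eq_card.2 hall
    have := h (c x)
    omega
  obtain ⟨s', rfl⟩ := exists_cons_of_mem (mem_toFinset.1 hxs)
  obtain ⟨t, rfl⟩ := exists_cons_of_mem
    ((mem_cons.1 hys).resolve_left fun hyx' => hyx (congrArg c hyx'))
  refine ⟨x, y, t, rfl, hyx.symm, fun b => ?_⟩
  have hcard : card t = 2 * k := by simp only [card_cons] at hs; omega
  have hb := hmax b
  have hx' := h (c x)
  simp only [countP_cons, if_neg hyx, if_true] at hb hx' ⊢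
  rcases eq_or_ne b (c x) with rfl | hbx
  · omega
  -- the class of `b` in `t` has at most `countP (c · = c x) s` elements, and it misses the
  -- `countP (c · = c x) s - 1` elements of `t` in the class of `x`
  have hsplit := card_eq_countP_add_countP (c · = c x) t
  have hle : t.countP (c · = b) ≤ t.countP (¬c · = c x) := by
    simp only [countP_eq_card_filter]
    exact card_le_card (monotone_filter_right t fun z hz => hz ▸ hbx)
  split_ifs at hb <;> omega

theorem exists_pairing_of_countP_le :
    ∀ (k : ℕ) (s : Multiset α), card s = 2 * k → (∀ b, s.countP (c · = b) ≤ k) →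
      ∃ f : Fin k → α × α, ∑ i, ({(f i).1, (f i).2} : Multiset α) = s ∧
        ∀ i, c (f i).1 ≠ c (f i).2
  | 0, s, hs, _ => ⟨Fin.elim0, by simp [card_eq_zero.1 hs], fun i => i.elim0⟩
  | k + 1, s, hs, h => by
    obtain ⟨x, y, t, rfl, hxy, ht⟩ := exists_eq_cons_cons_countP_le c hs h
    have hcard : card t = 2 * k := by simp only [card_cons] at hs; omega
    obtain ⟨f, hf, hfc⟩ := exists_pairing_of_countP_le k t hcard ht
    refine ⟨Fin.cons (x, y) f, ?_, Fin.cases hxy hfc⟩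
    rw [Fin.sum_univ_succ]
    simp only [Fin.cons_zero, Fin.cons_succ, hf]
    simp

end Multiset

namespace SimpleGraph

variable {V : Type*} {G : SimpleGraph V}

lemma Walk.snd_eq_start_iff {p u : V} {q : G.Walk p u} : q.snd = p ↔ q.Nil := by
  refine ⟨fun h => not_not.1 fun hq => (q.adj_snd hq).ne h.symm, fun hq => ?_⟩
  obtain rfl := hq.eq
  rw [eq_nil_iff_nil.2 hq]
  rfl

lemma Walk.dist_snd_add_one_le_length {p u : V} {q : G.Walk p u} (hq : ¬q.Nil) :
    G.dist q.snd u + 1 ≤ q.length :=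
  length_tail_add_one hq ▸ Nat.add_le_add_right (dist_le q.tail) 1

theorem two_mul_card_filter_snd_le [DecidableEq V] {p d : V} (hd : d ≠ p) {U : Finset V}
    (hmin : ∀ q, ∑ u ∈ U, G.dist p u ≤ ∑ u ∈ U, G.dist q u)
    (P : ∀ u, G.Walk p u) (hP : ∀ u, (P u).length = G.dist p u) :
    2 * #{u ∈ U | (P u).snd = d} ≤ #U := by
  rcases eq_empty_or_nonempty {u ∈ U | (P u).snd = d} with hB | ⟨u₀, hu₀⟩
  · simp [hB]
  have hnil : ∀ u, (P u).snd = d → ¬(P u).Nil := fun u hu hn =>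
    hd (hu.symm.trans (Walk.snd_eq_start_iff.2 hn))
  have hadj : G.Adj p d := (mem_filter.1 hu₀).2 ▸ Walk.adj_snd (hnil _ (mem_filter.1 hu₀).2)
  have key : ∀ u, G.dist d u + 2 * (if (P u).snd = d then 1 else 0) ≤ G.dist p u + 1 := by
    intro u
    split_ifs with hu
    · have := Walk.dist_snd_add_one_le_length (hnil u hu)
      rw [hu, hP] at this
      omega
    · have := hadj.symm.reachable.dist_triangle_left u
      rw [dist_eq_one_iff_adj.2 hadj.symm] at this
      omega
  have hsum := sum_le_sum fun u (_ : u ∈ U) => key u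
  rw [sum_add_distrib, sum_add_distrib, ← mul_sum, sum_boole, Nat.cast_id, sum_const, smul_eq_mul,
    mul_one] at hsum
  have := hmin d
  omega

theorem IsAcyclic.snd_eq_of_mem_support (hG : G.IsAcyclic) {p u v x : V}
    {q₁ : G.Walk p u} {q₂ : G.Walk p v} (h₁ : q₁.IsPath) (h₂ : q₂.IsPath)
    (hx₁ : x ∈ q₁.support) (hx₂ : x ∈ q₂.support) (hxp : x ≠ p) : q₁.snd = q₂.snd := by
  classical
  have h := congrArg Subtype.val
    ((hG.subsingleton_path p x).elim ⟨_, h₁.takeUntil hx₁⟩ ⟨_, h₂.takeUntil hx₂⟩)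
  dsimp only at h
  rw [← Walk.snd_takeUntil hxp q₁ hx₁, ← Walk.snd_takeUntil hxp q₂ hx₂, h]

theorem IsAcyclic.isPath_reverse_append (hG : G.IsAcyclic) {p u v : V}
    {q₁ : G.Walk p u} {q₂ : G.Walk p v} (h₁ : q₁.IsPath) (h₂ : q₂.IsPath)
    (hsnd : q₁.snd ≠ q₂.snd) : (q₁.reverse.append q₂).IsPath := by
  rw [Walk.isPath_def, Walk.support_append, Walk.support_reverse]
  refine List.nodup_append.2 ⟨List.nodup_reverse.2 h₁.support_nodup,
    h₂.support_nodup.sublist (List.tail_sublist _), fun x hx₁ y hx₂ hxy => ?_⟩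
  subst hxy
  rcases eq_or_ne x p with rfl | hxp
  · have := h₂.support_nodup
    rw [← Walk.cons_tail_support] at this
    exact (List.nodup_cons.1 this).1 hx₂
  · exact hsnd (hG.snd_eq_of_mem_support h₁ h₂ (List.mem_reverse.1 hx₁)
      (List.mem_of_mem_tail hx₂) hxp)

end SimpleGraph

open SimpleGraph in
theorem tree_tverberg_pairs_general {V : Type*}
    (G : SimpleGraph V) (hconn : G.Connected) (hacyclic : G.IsAcyclic)
    (k : ℕ) (U : Finset V) (hU : U.card = 2 * k) :
    ∃ (p : V) (f : Fin k → V × V),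
      ((Finset.univ.val.bind fun i : Fin k => {(f i).1, (f i).2}) = U.val) ∧
      ∀ i : Fin k, ∃ w : G.Walk (f i).1 (f i).2, w.IsPath ∧ p ∈ w.support := by
  classical
  have := hconn.nonempty
  obtain ⟨p, hp⟩ : ∃ p, ∀ q, ∑ u ∈ U, G.dist p u ≤ ∑ u ∈ U, G.dist q u :=
    ⟨_, fun q => Function.argmin_le (fun q => ∑ u ∈ U, G.dist q u) q⟩
  choose P hP using fun u => hconn.exists_walk_length_eq_dist p u
  have hpath : ∀ u, (P u).IsPath := fun u => (P u).isPath_of_length_eq_dist (hP u)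
  have hclass : ∀ d, U.val.countP (fun u => (P u).snd = d) ≤ k := by
    intro d
    rw [Multiset.countP_eq_card_filter, ← Finset.filter_val, ← Finset.card_def]
    rcases eq_or_ne d p with hdp | hd
    · subst d
      have : #{u ∈ U | (P u).snd = p} ≤ 1 := Finset.card_le_one.2 fun a ha b hb =>
        (Walk.snd_eq_start_iff.1 (mem_filter.1 ha).2).eq.symm.trans
          (Walk.snd_eq_start_iff.1 (mem_filter.1 hb).2).eq
      have := card_le_card (filter_subset (fun u => (P u).snd = p) U)
      omega
    · have := two_mul_card_filter_snd_le hd hp P hP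
      omega
  obtain ⟨f, hf, hne⟩ := Multiset.exists_pairing_of_countP_le _ k U.val hU hclass
  refine ⟨p, f, hf, fun i => ⟨_, hacyclic.isPath_reverse_append (hpath _) (hpath _) (hne i), ?_⟩⟩
  exact (Walk.mem_support_append_iff _ _).2 (Or.inl (Walk.end_mem_support _))

/-- Tverberg for trees: a set `U` of `2k` vertices of a finite tree can be
partitioned into `k` pairs whose (unique) connecting paths all pass through a
common vertex `p`. -/
theorem tree_tverberg_pairs {V : Type*} [Fintype V] [DecidableEq V]
    (G : SimpleGraph V) (hconn : G.Connected) (hacyclic : G.IsAcyclic)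
    (k : ℕ) (hk : 1 ≤ k) (U : Finset V) (hU : U.card = 2 * k) :
    ∃ (p : V) (f : Fin k → V × V),
      ((Finset.univ.val.bind fun i : Fin k => {(f i).1, (f i).2}) = U.val) ∧
      ∀ i : Fin k, ∃ w : G.Walk (f i).1 (f i).2, w.IsPath ∧ p ∈ w.support :=
  tree_tverberg_pairs_general G hconn hacyclic k U hU
end
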